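/- There exists a constant K > 0 such that for all X, Y ∈ G_β one has |F₀(X) − F₀(Y)| ≤ K·‖X − Y‖₁; that is, the zeroth component of the UNI-MIN limiting vector field is Lipschitz continuous on G_β. -/

import Mathlib

lemma mul_lip (a a' b b' : ℝ) : |a*b - a'*b'| ≤ |a - a'| * |b| + |a'| * |b - b'| := by
  have h : a*b - a'*b' = (a-a')*b + a'*(b-b') := by ring
  rw [h]
  refine (abs_add_le _ _).trans ?_
  rw [abs_mul, abs_mul]

lemma div_lip {β a b c d : ℝ} (hβ : 0 < β) (hb : β ≤ b) (hd : β ≤ d) :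
    |a/b - c/d| ≤ |a - c|/β + |c| * |b - d| / β^2 := by
  have hb0 : 0 < b := hβ.trans_le hb
  have hd0 : 0 < d := hβ.trans_le hd
  have h : a/b - c/d = (a - c)/b + c * (d - b)/(b*d) := by field_simp; ring
  calc |a/b - c/d| = |(a-c)/b + c*(d-b)/(b*d)| := by rw [h]
    _ ≤ |(a-c)/b| + |c*(d-b)/(b*d)| := abs_add_le _ _
    _ = |a-c|/b + |c| * |b-d| / (b*d) := by
        rw [abs_div, abs_div, abs_mul, abs_of_pos hb0, abs_of_pos (mul_pos hb0 hd0),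
          abs_sub_comm d b]
    _ ≤ |a-c|/β + |c| * |b-d| / (β*β) := by
        gcongr
    _ = |a-c|/β + |c| * |b-d| / β^2 := by ring

lemma pow_lip {a b : ℝ} (ha0 : 0 ≤ a) (ha1 : a ≤ 1) (hb0 : 0 ≤ b) (hb1 : b ≤ 1) :
    ∀ k : ℕ, |a ^ k - b ^ k| ≤ k * |a - b| := by
  intro k
  induction k with
  | zero => simp
  | succ k ih =>
    have h : a ^ (k+1) - b ^ (k+1) = a ^ k * (a - b) + b * (a ^ k - b ^ k) := by ring
    calc |a^(k+1) - b^(k+1)| ≤ |a^k * (a-b)| + |b * (a^k - b^k)| := by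
          rw [h]; exact abs_add_le _ _
      _ = a^k * |a-b| + b * |a^k - b^k| := by
          rw [abs_mul, abs_mul, abs_of_nonneg (pow_nonneg ha0 _), abs_of_nonneg hb0]
      _ ≤ 1 * |a-b| + 1 * (k * |a-b|) := by
          gcongr
          exact pow_le_one₀ ha0 ha1
      _ = ((k+1 : ℕ) : ℝ) * |a-b| := by push_cast; ring

/-- `m_X = ∑_{k=1}^N X(k)`. -/
noncomputable def mS (N : ℕ) (X : ℕ → ℝ) : ℝ := ∑ k ∈ Finset.Icc 1 N, X k

/-- `M_X = ∑_{k=1}^N k·X(k)`. -/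
noncomputable def MS (N : ℕ) (X : ℕ → ℝ) : ℝ := ∑ k ∈ Finset.Icc 1 N, (k : ℝ) * X k

/-- `Q_X(i) = (1/M_X)·∑_{k=i}^N k·X(k)`; for `i = N+1` the sum is empty, so the
convention `Q_X(N+1) = 0` holds automatically. -/
noncomputable def QS (N : ℕ) (X : ℕ → ℝ) (i : ℕ) : ℝ :=
  (∑ k ∈ Finset.Icc i N, (k : ℝ) * X k) / MS N X

/-- The 1-norm `‖X − Y‖₁ = ∑_{k=0}^N |X(k) − Y(k)|`. -/
noncomputable def norm1 (N : ℕ) (X Y : ℕ → ℝ) : ℝ :=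
  ∑ k ∈ Finset.range (N + 1), |X k - Y k|

/-- Membership in the cube `[0,1]^{N+1}`. -/
def cube (N : ℕ) (X : ℕ → ℝ) : Prop := ∀ k ≤ N, 0 ≤ X k ∧ X k ≤ 1

/-- `G_β = {X ∈ [0,1]^{N+1} : m_X ≥ β}`. -/
def Gset (N : ℕ) (β : ℝ) (X : ℕ → ℝ) : Prop := cube N X ∧ β ≤ mS N X

/-- The zeroth component of the limiting vector field of the UNI-MIN matching algorithm:
`F₀(X) = −((M_X − m_X)/m_X)·(X(1)/M_X)
        − (X(1)/M_X)·∑_{l=1}^N (l−1)·∑_{k=1}^N (X(k)/m_X)·(Q_X(l)^k − Q_X(l+1)^k)`. -/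
noncomputable def F0 (N : ℕ) (X : ℕ → ℝ) : ℝ :=
  -((MS N X - mS N X) / mS N X) * (X 1 / MS N X)
    - (X 1 / MS N X) *
        ∑ l ∈ Finset.Icc 1 N, ((l : ℝ) - 1) *
          ∑ k ∈ Finset.Icc 1 N, (X k / mS N X) * (QS N X l ^ k - QS N X (l + 1) ^ k)

section Bounds
variable {N : ℕ} {X : ℕ → ℝ}

lemma Icc_sub_range (l : ℕ) : Finset.Icc l N ⊆ Finset.range (N+1) := by
  intro k hk
  simp only [Finset.mem_Icc] at hk
  simp [Nat.lt_succ_of_le hk.2]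

lemma mS_le (hX : cube N X) : mS N X ≤ N := by
  calc mS N X ≤ ∑ k ∈ Finset.Icc 1 N, (1:ℝ) :=
        Finset.sum_le_sum (fun k hk => (hX k (Finset.mem_Icc.mp hk).2).2)
    _ = N := by simp

lemma S_nonneg (hX : cube N X) (l : ℕ) : 0 ≤ ∑ k ∈ Finset.Icc l N, (k:ℝ) * X k :=
  Finset.sum_nonneg fun k hk =>
    mul_nonneg (Nat.cast_nonneg k) (hX k (Finset.mem_Icc.mp hk).2).1

lemma S_le_MS (hX : cube N X) {l : ℕ} (hl : 1 ≤ l) :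
    ∑ k ∈ Finset.Icc l N, (k:ℝ) * X k ≤ MS N X :=
  Finset.sum_le_sum_of_subset_of_nonneg (Finset.Icc_subset_Icc_left hl)
    (fun k hk _ => mul_nonneg (Nat.cast_nonneg k) (hX k (Finset.mem_Icc.mp hk).2).1)

lemma MS_le (hX : cube N X) : MS N X ≤ (N:ℝ) * N := by
  calc MS N X ≤ ∑ k ∈ Finset.Icc 1 N, (N:ℝ) * 1 := by
        refine Finset.sum_le_sum fun k hk => ?_
        have hk' := Finset.mem_Icc.mp hk
        have h0 := hX k hk'.2
        exact mul_le_mul (by exact_mod_cast hk'.2) h0.2 h0.1 (Nat.cast_nonneg N)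
    _ = (N:ℝ) * N := by simp [mul_comm]

lemma mS_le_MS (hX : cube N X) : mS N X ≤ MS N X := by
  refine Finset.sum_le_sum fun k hk => ?_
  have hk' := Finset.mem_Icc.mp hk
  have h0 := hX k hk'.2
  nlinarith [h0.1, (show (1:ℝ) ≤ k by exact_mod_cast hk'.1)]

lemma QS_mem {β : ℝ} (hβ : 0 < β) (hX : Gset N β X) {l : ℕ} (hl : 1 ≤ l) :
    0 ≤ QS N X l ∧ QS N X l ≤ 1 := by
  have hM : 0 < MS N X := lt_of_lt_of_le hβ (hX.2.trans (mS_le_MS hX.1))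
  constructor
  · exact div_nonneg (S_nonneg hX.1 l) hM.le
  · rw [QS, div_le_one hM]
    exact S_le_MS hX.1 hl

end Bounds

section Diffs
variable {N : ℕ} {X Y : ℕ → ℝ}

lemma norm1_nonneg (N : ℕ) (X Y : ℕ → ℝ) : 0 ≤ norm1 N X Y :=
  Finset.sum_nonneg fun k _ => abs_nonneg _

lemma abs_sub_le_norm1 {k : ℕ} (hk : k ≤ N) : |X k - Y k| ≤ norm1 N X Y :=
  Finset.single_le_sum (f := fun k => |X k - Y k|) (fun i _ => abs_nonneg _)
    (Finset.mem_range.mpr (Nat.lt_succ_of_le hk))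

lemma sum_abs_le_norm1 (l : ℕ) :
    ∑ k ∈ Finset.Icc l N, |X k - Y k| ≤ norm1 N X Y :=
  Finset.sum_le_sum_of_subset_of_nonneg (Icc_sub_range l) (fun k _ _ => abs_nonneg _)

lemma mS_diff : |mS N X - mS N Y| ≤ norm1 N X Y := by
  rw [mS, mS, ← Finset.sum_sub_distrib]
  exact (Finset.abs_sum_le_sum_abs _ _).trans (sum_abs_le_norm1 1)

lemma S_diff (l : ℕ) :
    |(∑ k ∈ Finset.Icc l N, (k:ℝ) * X k) - ∑ k ∈ Finset.Icc l N, (k:ℝ) * Y k|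
      ≤ (N:ℝ) * norm1 N X Y := by
  rw [← Finset.sum_sub_distrib]
  calc |∑ k ∈ Finset.Icc l N, ((k:ℝ) * X k - (k:ℝ) * Y k)|
      ≤ ∑ k ∈ Finset.Icc l N, |(k:ℝ) * X k - (k:ℝ) * Y k| :=
        Finset.abs_sum_le_sum_abs _ _
    _ = ∑ k ∈ Finset.Icc l N, (k:ℝ) * |X k - Y k| := by
        refine Finset.sum_congr rfl fun k _ => ?_
        rw [← mul_sub, abs_mul, Nat.abs_cast]
    _ ≤ ∑ k ∈ Finset.Icc l N, (N:ℝ) * |X k - Y k| := by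
        refine Finset.sum_le_sum fun k hk => ?_
        have : (k:ℝ) ≤ N := by exact_mod_cast (Finset.mem_Icc.mp hk).2
        exact mul_le_mul_of_nonneg_right this (abs_nonneg _)
    _ = (N:ℝ) * ∑ k ∈ Finset.Icc l N, |X k - Y k| := by rw [Finset.mul_sum]
    _ ≤ (N:ℝ) * norm1 N X Y :=
        mul_le_mul_of_nonneg_left (sum_abs_le_norm1 l) (Nat.cast_nonneg N)

lemma MS_diff : |MS N X - MS N Y| ≤ (N:ℝ) * norm1 N X Y := S_diff 1

lemma QS_diff {β : ℝ} (hβ : 0 < β) (hX : Gset N β X) (hY : Gset N β Y) {l : ℕ}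
    (hl : 1 ≤ l) :
    |QS N X l - QS N Y l| ≤ ((N:ℝ)/β + (N:ℝ)^3/β^2) * norm1 N X Y := by
  have hMX : β ≤ MS N X := hX.2.trans (mS_le_MS hX.1)
  have hMY : β ≤ MS N Y := hY.2.trans (mS_le_MS hY.1)
  have h := div_lip (a := ∑ k ∈ Finset.Icc l N, (k:ℝ) * X k)
    (c := ∑ k ∈ Finset.Icc l N, (k:ℝ) * Y k) hβ hMX hMY
  refine h.trans ?_
  have h1 : |(∑ k ∈ Finset.Icc l N, (k:ℝ) * X k) - ∑ k ∈ Finset.Icc l N, (k:ℝ) * Y k| / β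
      ≤ (N:ℝ) * norm1 N X Y / β := by
    gcongr
    exact S_diff l
  have hSY : |∑ k ∈ Finset.Icc l N, (k:ℝ) * Y k| ≤ (N:ℝ) * N := by
    rw [abs_of_nonneg (S_nonneg hY.1 l)]
    exact (S_le_MS hY.1 hl).trans (MS_le hY.1)
  have h2 : |∑ k ∈ Finset.Icc l N, (k:ℝ) * Y k| * |MS N X - MS N Y| / β^2
      ≤ ((N:ℝ) * N) * ((N:ℝ) * norm1 N X Y) / β^2 := by
    gcongr <;> first | exact hSY | exact MS_diff
  refine (add_le_add h1 h2).trans_eq ?_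
  field_simp

lemma abs_diff_le_one {a b : ℝ} (ha0 : 0 ≤ a) (ha1 : a ≤ 1) (hb0 : 0 ≤ b) (hb1 : b ≤ 1) :
    |a - b| ≤ 1 := abs_sub_le_iff.mpr ⟨by linarith, by linarith⟩

lemma card_Icc_mul (N : ℕ) (c : ℝ) : ∑ _l ∈ Finset.Icc 1 N, c = (N:ℝ) * c := by
  rw [Finset.sum_const, Nat.card_Icc]
  simp [nsmul_eq_mul]

/-- Bound on `T X`. -/
lemma T_bd {N : ℕ} {β : ℝ} {X : ℕ → ℝ} (hβ : 0 < β) (hX : Gset N β X) :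
    |∑ l ∈ Finset.Icc 1 N, ((l : ℝ) - 1) *
        ∑ k ∈ Finset.Icc 1 N, (X k / mS N X) * (QS N X l ^ k - QS N X (l + 1) ^ k)|
      ≤ (N:ℝ)^3 / β := by
  have hm : 0 < mS N X := hβ.trans_le hX.2
  have hterm : ∀ l ∈ Finset.Icc 1 N, ∀ k ∈ Finset.Icc 1 N,
      |(X k / mS N X) * (QS N X l ^ k - QS N X (l + 1) ^ k)| ≤ 1/β := by
    intro l hl k hk
    have hl' := Finset.mem_Icc.mp hl
    have hk' := Finset.mem_Icc.mp hk
    have hq1 := QS_mem hβ hX hl'.1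
    have hq2 := QS_mem hβ hX (l := l+1) (Nat.le_succ_of_le hl'.1)
    have hXk := hX.1 k hk'.2
    rw [abs_mul, abs_div]
    have h1 : |X k| / |mS N X| ≤ 1 / β := by
      rw [abs_of_pos hm]
      exact div_le_div₀ (by norm_num) (abs_le.mpr ⟨by linarith [hXk.1], hXk.2⟩) hβ hX.2
    have h2 : |QS N X l ^ k - QS N X (l + 1) ^ k| ≤ 1 :=
      abs_diff_le_one (pow_nonneg hq1.1 k) (pow_le_one₀ hq1.1 hq1.2)
        (pow_nonneg hq2.1 k) (pow_le_one₀ hq2.1 hq2.2)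
    calc |X k| / |mS N X| * |QS N X l ^ k - QS N X (l + 1) ^ k|
        ≤ (1/β) * 1 := mul_le_mul h1 h2 (abs_nonneg _) (by positivity)
      _ = 1/β := by ring
  calc |∑ l ∈ Finset.Icc 1 N, ((l : ℝ) - 1) *
        ∑ k ∈ Finset.Icc 1 N, (X k / mS N X) * (QS N X l ^ k - QS N X (l + 1) ^ k)|
      ≤ ∑ l ∈ Finset.Icc 1 N, |((l : ℝ) - 1) *
        ∑ k ∈ Finset.Icc 1 N, (X k / mS N X) * (QS N X l ^ k - QS N X (l + 1) ^ k)| :=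
        Finset.abs_sum_le_sum_abs _ _
    _ ≤ ∑ l ∈ Finset.Icc 1 N, (N:ℝ) * ((N:ℝ) * (1/β)) := by
        refine Finset.sum_le_sum fun l hl => ?_
        have hl' := Finset.mem_Icc.mp hl
        rw [abs_mul]
        have hlb : |(l:ℝ) - 1| ≤ N := by
          have h1 : (1:ℝ) ≤ l := by exact_mod_cast hl'.1
          have h2 : (l:ℝ) ≤ N := by exact_mod_cast hl'.2
          rw [abs_le]; constructor <;> nlinarith
        have hin : |∑ k ∈ Finset.Icc 1 N,
            (X k / mS N X) * (QS N X l ^ k - QS N X (l + 1) ^ k)| ≤ (N:ℝ) * (1/β) := by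
          refine (Finset.abs_sum_le_sum_abs _ _).trans ?_
          calc ∑ k ∈ Finset.Icc 1 N,
              |(X k / mS N X) * (QS N X l ^ k - QS N X (l + 1) ^ k)|
              ≤ ∑ _k ∈ Finset.Icc 1 N, (1/β) :=
                Finset.sum_le_sum fun k hk => hterm l hl k hk
            _ = (N:ℝ) * (1/β) := card_Icc_mul N _
        exact mul_le_mul hlb hin (abs_nonneg _) (Nat.cast_nonneg N)
    _ = (N:ℝ) * ((N:ℝ) * ((N:ℝ) * (1/β))) := card_Icc_mul N _
    _ = (N:ℝ)^3 / β := by ring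

/-- Lipschitz estimate for the double sum `T`. -/
lemma T_lip {N : ℕ} {β : ℝ} {X Y : ℕ → ℝ} (hβ : 0 < β)
    (hX : Gset N β X) (hY : Gset N β Y) :
    |(∑ l ∈ Finset.Icc 1 N, ((l : ℝ) - 1) *
        ∑ k ∈ Finset.Icc 1 N, (X k / mS N X) * (QS N X l ^ k - QS N X (l + 1) ^ k)) -
      ∑ l ∈ Finset.Icc 1 N, ((l : ℝ) - 1) *
        ∑ k ∈ Finset.Icc 1 N, (Y k / mS N Y) * (QS N Y l ^ k - QS N Y (l + 1) ^ k)|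
      ≤ (N:ℝ)^3 * (1/β + 1/β^2 + 2*(N:ℝ)*((N:ℝ)/β + (N:ℝ)^3/β^2)/β) * norm1 N X Y := by
  set D := norm1 N X Y with hDdef
  have hD : 0 ≤ D := norm1_nonneg N X Y
  set Cq : ℝ := (N:ℝ)/β + (N:ℝ)^3/β^2 with hCq
  set Ct : ℝ := 1/β + 1/β^2 + 2*(N:ℝ)*Cq/β with hCt
  have hterm : ∀ l ∈ Finset.Icc 1 N, ∀ k ∈ Finset.Icc 1 N,
      |(X k / mS N X) * (QS N X l ^ k - QS N X (l + 1) ^ k) -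
        (Y k / mS N Y) * (QS N Y l ^ k - QS N Y (l + 1) ^ k)| ≤ Ct * D := by
    intro l hl k hk
    have hl' := Finset.mem_Icc.mp hl
    have hk' := Finset.mem_Icc.mp hk
    have hqX1 := QS_mem hβ hX hl'.1
    have hqX2 := QS_mem hβ hX (l := l+1) (Nat.le_succ_of_le hl'.1)
    have hqY1 := QS_mem hβ hY hl'.1
    have hqY2 := QS_mem hβ hY (l := l+1) (Nat.le_succ_of_le hl'.1)
    have hXk := hX.1 k hk'.2
    have hYk := hY.1 k hk'.2
    have hkN : (k:ℝ) ≤ N := by exact_mod_cast hk'.2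
    -- first factor Lipschitz
    have hf : |X k / mS N X - Y k / mS N Y| ≤ D/β + D/β^2 := by
      refine (div_lip hβ hX.2 hY.2).trans ?_
      have h1 : |X k - Y k| ≤ D := abs_sub_le_norm1 hk'.2
      have h2 : |Y k| ≤ 1 := abs_le.mpr ⟨by linarith [hYk.1], hYk.2⟩
      have h3 : |mS N X - mS N Y| ≤ D := mS_diff
      have : |Y k| * |mS N X - mS N Y| ≤ 1 * D :=
        mul_le_mul h2 h3 (abs_nonneg _) zero_le_one
      gcongr <;> simp_all
    -- powers Lipschitz
    have hp : ∀ j : ℕ, 1 ≤ j → |QS N X j ^ k - QS N Y j ^ k| ≤ (N:ℝ) * (Cq * D) := by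
      intro j hj
      have hqX := QS_mem hβ hX hj
      have hqY := QS_mem hβ hY hj
      have h1 : |QS N X j ^ k - QS N Y j ^ k| ≤ (k:ℝ) * |QS N X j - QS N Y j| :=
        pow_lip hqX.1 hqX.2 hqY.1 hqY.2 k
      refine h1.trans ?_
      have h2 : |QS N X j - QS N Y j| ≤ Cq * D := QS_diff hβ hX hY hj
      have := mul_le_mul hkN h2 (abs_nonneg _) (Nat.cast_nonneg N)
      exact (mul_le_mul_of_nonneg_left h2 (by positivity)).trans
        (mul_le_mul_of_nonneg_right hkN ((abs_nonneg _).trans h2))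
    -- assemble the product estimate
    refine (mul_lip _ _ _ _).trans ?_
    have hb : |QS N X l ^ k - QS N X (l + 1) ^ k| ≤ 1 :=
      abs_diff_le_one (pow_nonneg hqX1.1 k) (pow_le_one₀ hqX1.1 hqX1.2)
        (pow_nonneg hqX2.1 k) (pow_le_one₀ hqX2.1 hqX2.2)
    have ha' : |Y k / mS N Y| ≤ 1/β := by
      rw [abs_div, abs_of_pos (hβ.trans_le hY.2)]
      exact div_le_div₀ (by norm_num) (abs_le.mpr ⟨by linarith [hYk.1], hYk.2⟩) hβ hY.2
    have hbb' : |(QS N X l ^ k - QS N X (l + 1) ^ k) -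
        (QS N Y l ^ k - QS N Y (l + 1) ^ k)| ≤ 2 * ((N:ℝ) * (Cq * D)) := by
      have he : (QS N X l ^ k - QS N X (l + 1) ^ k) -
          (QS N Y l ^ k - QS N Y (l + 1) ^ k)
          = (QS N X l ^ k - QS N Y l ^ k) - (QS N X (l+1) ^ k - QS N Y (l+1) ^ k) := by
        ring
      rw [he]
      refine (abs_sub _ _).trans ?_
      have := add_le_add (hp l hl'.1) (hp (l+1) (Nat.le_succ_of_le hl'.1))
      linarith
    have t1 : |X k / mS N X - Y k / mS N Y| * |QS N X l ^ k - QS N X (l + 1) ^ k|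
        ≤ (D/β + D/β^2) * 1 :=
      mul_le_mul hf hb (abs_nonneg _) (by positivity)
    have t2 : |Y k / mS N Y| * |(QS N X l ^ k - QS N X (l + 1) ^ k) -
        (QS N Y l ^ k - QS N Y (l + 1) ^ k)| ≤ (1/β) * (2 * ((N:ℝ) * (Cq * D))) :=
      mul_le_mul ha' hbb' (abs_nonneg _) (by positivity)
    have he2 : (D/β + D/β^2) * 1 + (1/β) * (2 * ((N:ℝ) * (Cq * D))) = Ct * D := by
      rw [hCt]; ring
    linarith
  -- assemble the double sum estimate
  rw [← Finset.sum_sub_distrib]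
  calc |∑ l ∈ Finset.Icc 1 N, (((l : ℝ) - 1) *
        (∑ k ∈ Finset.Icc 1 N, (X k / mS N X) * (QS N X l ^ k - QS N X (l + 1) ^ k)) -
        ((l : ℝ) - 1) *
        ∑ k ∈ Finset.Icc 1 N, (Y k / mS N Y) * (QS N Y l ^ k - QS N Y (l + 1) ^ k))|
      ≤ ∑ l ∈ Finset.Icc 1 N, |(((l : ℝ) - 1) *
        (∑ k ∈ Finset.Icc 1 N, (X k / mS N X) * (QS N X l ^ k - QS N X (l + 1) ^ k)) -
        ((l : ℝ) - 1) *
        ∑ k ∈ Finset.Icc 1 N, (Y k / mS N Y) * (QS N Y l ^ k - QS N Y (l + 1) ^ k))| :=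
        Finset.abs_sum_le_sum_abs _ _
    _ ≤ ∑ l ∈ Finset.Icc 1 N, (N:ℝ) * ((N:ℝ) * (Ct * D)) := by
        refine Finset.sum_le_sum fun l hl => ?_
        have hl' := Finset.mem_Icc.mp hl
        rw [← mul_sub, abs_mul]
        have hlb : |(l:ℝ) - 1| ≤ N := by
          have h1 : (1:ℝ) ≤ l := by exact_mod_cast hl'.1
          have h2 : (l:ℝ) ≤ N := by exact_mod_cast hl'.2
          rw [abs_le]; constructor <;> nlinarith
        have hin : |(∑ k ∈ Finset.Icc 1 N, (X k / mS N X) * (QS N X l ^ k - QS N X (l + 1) ^ k)) -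
            ∑ k ∈ Finset.Icc 1 N, (Y k / mS N Y) * (QS N Y l ^ k - QS N Y (l + 1) ^ k)|
            ≤ (N:ℝ) * (Ct * D) := by
          rw [← Finset.sum_sub_distrib]
          refine (Finset.abs_sum_le_sum_abs _ _).trans ?_
          calc ∑ k ∈ Finset.Icc 1 N,
              |(X k / mS N X) * (QS N X l ^ k - QS N X (l + 1) ^ k) -
                (Y k / mS N Y) * (QS N Y l ^ k - QS N Y (l + 1) ^ k)|
              ≤ ∑ _k ∈ Finset.Icc 1 N, (Ct * D) :=
                Finset.sum_le_sum fun k hk => hterm l hl k hk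
            _ = (N:ℝ) * (Ct * D) := card_Icc_mul N _
        exact mul_le_mul hlb hin (abs_nonneg _) (Nat.cast_nonneg N)
    _ = (N:ℝ) * ((N:ℝ) * ((N:ℝ) * (Ct * D))) := card_Icc_mul N _
    _ = (N:ℝ)^3 * Ct * D := by ring

/-- Generic combination of Lipschitz estimates for `-A·B - B·T`. -/
lemma combine_lip {A B T A' B' T' a b t la lb lt D : ℝ}
    (hA' : |A'| ≤ a) (hB : |B| ≤ b) (hB' : |B'| ≤ b) (hT : |T| ≤ t)
    (hlA : |A - A'| ≤ la * D) (hlB : |B - B'| ≤ lb * D) (hlT : |T - T'| ≤ lt * D) :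
    |(-A * B - B * T) - (-A' * B' - B' * T')|
      ≤ (la * b + a * lb + lb * t + b * lt) * D := by
  have h1 : |A * B - A' * B'| ≤ |A - A'| * |B| + |A'| * |B - B'| := mul_lip _ _ _ _
  have h2 : |B * T - B' * T'| ≤ |B - B'| * |T| + |B'| * |T - T'| := by
    have e : B * T - B' * T' = (B - B') * T + B' * (T - T') := by ring
    rw [e]
    refine (abs_add_le _ _).trans ?_
    rw [abs_mul, abs_mul]
  have e2 : (-A * B - B * T) - (-A' * B' - B' * T')
      = -((A * B - A' * B') + (B * T - B' * T')) := by ring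
  have h0 : |(-A * B - B * T) - (-A' * B' - B' * T')|
      ≤ |A * B - A' * B'| + |B * T - B' * T'| := by
    rw [e2, abs_neg]
    exact abs_add_le _ _
  have t1 : |A - A'| * |B| ≤ (la * D) * b :=
    mul_le_mul hlA hB (abs_nonneg _) ((abs_nonneg _).trans hlA)
  have t2 : |A'| * |B - B'| ≤ a * (lb * D) :=
    mul_le_mul hA' hlB (abs_nonneg _) ((abs_nonneg _).trans hA')
  have t3 : |B - B'| * |T| ≤ (lb * D) * t :=
    mul_le_mul hlB hT (abs_nonneg _) ((abs_nonneg _).trans hlB)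
  have t4 : |B'| * |T - T'| ≤ b * (lt * D) :=
    mul_le_mul hB' hlT (abs_nonneg _) ((abs_nonneg _).trans hB')
  nlinarith [h1, h2, h0, t1, t2, t3, t4]

/-- There exists `K > 0` such that for all `X, Y ∈ G_β`,
`|F₀(X) − F₀(Y)| ≤ K·‖X − Y‖₁`: the zeroth component of the UNI-MIN limiting
vector field is Lipschitz continuous on `G_β`. -/
theorem F0_lipschitz (N : ℕ) (hN : 1 ≤ N) (β : ℝ) (hβ0 : 0 < β) (hβ1 : β < 1) :
    ∃ K : ℝ, 0 < K ∧ ∀ X Y : ℕ → ℝ, Gset N β X → Gset N β Y →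
      |F0 N X - F0 N Y| ≤ K * norm1 N X Y := by
  set Cq : ℝ := (N:ℝ)/β + (N:ℝ)^3/β^2 with hCq
  set Ct : ℝ := 1/β + 1/β^2 + 2*(N:ℝ)*Cq/β with hCt
  set Ca : ℝ := ((N:ℝ)+1)/β + (N:ℝ)^2/β^2 with hCa
  set Cb : ℝ := 1/β + (N:ℝ)/β^2 with hCb
  set a : ℝ := (N:ℝ)^2/β with ha
  set b : ℝ := 1/β with hb
  set t : ℝ := (N:ℝ)^3/β with ht
  set lt : ℝ := (N:ℝ)^3 * Ct with hlt
  have hCq0 : 0 ≤ Cq := by rw [hCq]; positivity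
  have hCt0 : 0 ≤ Ct := by rw [hCt, hCq]; positivity
  have hCa0 : 0 ≤ Ca := by rw [hCa]; positivity
  have hCb0 : 0 ≤ Cb := by rw [hCb]; positivity
  have ha0 : 0 ≤ a := by rw [ha]; positivity
  have hb0 : 0 ≤ b := by rw [hb]; positivity
  have ht0 : 0 ≤ t := by rw [ht]; positivity
  have hlt0 : 0 ≤ lt := by
    rw [hlt]; exact mul_nonneg (by positivity) hCt0
  clear_value Cq Ct Ca Cb a b t lt
  have hKpos : 0 < Ca * b + a * Cb + Cb * t + b * lt + 1 := by
    have h0 : 0 ≤ Ca * b + a * Cb + Cb * t + b * lt :=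
      add_nonneg (add_nonneg (add_nonneg (mul_nonneg hCa0 hb0) (mul_nonneg ha0 hCb0))
        (mul_nonneg hCb0 ht0)) (mul_nonneg hb0 hlt0)
    linarith
  refine ⟨Ca * b + a * Cb + Cb * t + b * lt + 1, hKpos, ?_⟩
  intro X Y hX hY
  set D := norm1 N X Y with hD
  clear_value D
  have hDn : 0 ≤ D := hD ▸ norm1_nonneg N X Y
  have hmX : β ≤ mS N X := hX.2
  have hmY : β ≤ mS N Y := hY.2
  have hMX : β ≤ MS N X := hmX.trans (mS_le_MS hX.1)
  have hMY : β ≤ MS N Y := hmY.trans (mS_le_MS hY.1)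
  have hX1 := hX.1 1 hN
  have hY1 := hY.1 1 hN
  -- A' bound
  have hA' : |(MS N Y - mS N Y) / mS N Y| ≤ a := by
    rw [abs_div, abs_of_pos (hβ0.trans_le hmY)]
    have h1 : |MS N Y - mS N Y| ≤ (N:ℝ)^2 := by
      rw [abs_of_nonneg (by linarith [mS_le_MS hY.1])]
      have h2 := MS_le hY.1
      have h0 : (0:ℝ) ≤ mS N Y := le_trans hβ0.le hmY
      rw [pow_two]; linarith
    rw [ha]
    exact div_le_div₀ (by positivity) h1 hβ0 hmY
  -- B bounds
  have hBbd : ∀ Z : ℕ → ℝ, Gset N β Z → |Z 1 / MS N Z| ≤ b := by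
    intro Z hZ
    have hZ1 := hZ.1 1 hN
    rw [abs_div, abs_of_pos (hβ0.trans_le (hZ.2.trans (mS_le_MS hZ.1))), hb]
    exact div_le_div₀ (by norm_num) (abs_le.mpr ⟨by linarith [hZ1.1], hZ1.2⟩) hβ0
      (hZ.2.trans (mS_le_MS hZ.1))
  -- T bound for X
  have hT : |∑ l ∈ Finset.Icc 1 N, ((l : ℝ) - 1) *
      ∑ k ∈ Finset.Icc 1 N, (X k / mS N X) * (QS N X l ^ k - QS N X (l + 1) ^ k)| ≤ t := by
    rw [ht]; exact T_bd hβ0 hX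
  -- A Lipschitz
  have hlA : |(MS N X - mS N X) / mS N X - (MS N Y - mS N Y) / mS N Y| ≤ Ca * D := by
    refine (div_lip hβ0 hmX hmY).trans ?_
    have h1 : |(MS N X - mS N X) - (MS N Y - mS N Y)| ≤ ((N:ℝ)+1) * D := by
      have e : (MS N X - mS N X) - (MS N Y - mS N Y)
          = (MS N X - MS N Y) - (mS N X - mS N Y) := by ring
      rw [e]
      refine (abs_sub _ _).trans ?_
      have hh1 := MS_diff (N := N) (X := X) (Y := Y)
      have hh2 := mS_diff (N := N) (X := X) (Y := Y)
      rw [← hD] at hh1 hh2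
      linarith
    have h2 : |MS N Y - mS N Y| ≤ (N:ℝ)^2 := by
      rw [abs_of_nonneg (by linarith [mS_le_MS hY.1])]
      have h2' := MS_le hY.1
      have h0 : (0:ℝ) ≤ mS N Y := le_trans hβ0.le hmY
      rw [pow_two]; linarith
    have h3 : |mS N X - mS N Y| ≤ D := hD ▸ mS_diff
    have s1 : |(MS N X - mS N X) - (MS N Y - mS N Y)| / β ≤ ((N:ℝ)+1) * D / β := by
      gcongr
    have s2 : |MS N Y - mS N Y| * |mS N X - mS N Y| / β^2 ≤ (N:ℝ)^2 * D / β^2 := by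
      refine div_le_div₀ (by positivity) ?_ (by positivity) le_rfl
      exact mul_le_mul h2 h3 (abs_nonneg _) (by positivity)
    have e2 : ((N:ℝ)+1) * D / β + (N:ℝ)^2 * D / β^2 = Ca * D := by rw [hCa]; ring
    linarith
  -- B Lipschitz
  have hlB : |X 1 / MS N X - Y 1 / MS N Y| ≤ Cb * D := by
    refine (div_lip hβ0 hMX hMY).trans ?_
    have h1 : |X 1 - Y 1| ≤ D := hD ▸ abs_sub_le_norm1 hN
    have h2 : |Y 1| ≤ 1 := abs_le.mpr ⟨by linarith [hY1.1], hY1.2⟩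
    have h3 : |MS N X - MS N Y| ≤ (N:ℝ) * D := hD ▸ MS_diff
    have s1 : |X 1 - Y 1| / β ≤ D / β := by gcongr
    have s2 : |Y 1| * |MS N X - MS N Y| / β^2 ≤ (N:ℝ) * D / β^2 := by
      refine div_le_div₀ (by positivity) ?_ (by positivity) le_rfl
      have h4 := mul_le_mul h2 h3 (abs_nonneg _) zero_le_one
      linarith
    have e2 : D / β + (N:ℝ) * D / β^2 = Cb * D := by rw [hCb, hb]; ring
    linarith
  -- T Lipschitz
  have hlT : |(∑ l ∈ Finset.Icc 1 N, ((l : ℝ) - 1) *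
      ∑ k ∈ Finset.Icc 1 N, (X k / mS N X) * (QS N X l ^ k - QS N X (l + 1) ^ k)) -
      ∑ l ∈ Finset.Icc 1 N, ((l : ℝ) - 1) *
      ∑ k ∈ Finset.Icc 1 N, (Y k / mS N Y) * (QS N Y l ^ k - QS N Y (l + 1) ^ k)|
      ≤ lt * D := by
    have h := T_lip hβ0 hX hY
    rw [hlt, hCt, hCq, hb, hD]
    exact h
  have main := combine_lip hA' (hBbd X hX) (hBbd Y hY) hT hlA hlB hlT
  rw [F0, F0]
  refine main.trans ?_
  have hfin : (Ca * b + a * Cb + Cb * t + b * lt) * D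
      ≤ (Ca * b + a * Cb + Cb * t + b * lt + 1) * D :=
    mul_le_mul_of_nonneg_right (by linarith) hDn
  exact hfin
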